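/- arXiv:1301.2000 — 2 statements merged into one kernel-verified Lean document; each statement's English description precedes it below -/
import Mathlib

section
/- Let A be a real p-Banach algebra with unit such that ‖a‖^(1/p) ≤ m·r(a) for all a ∈ A, where m > 0 is a constant and r denotes the spectral radius. Let X(A) be the set of nonzero ℝ-linear multiplicative maps x : A → ℍ, equipped with the topology of pointwise convergence (the subspace topology inherited from the product ∏_{a ∈ A} ℍ). Then X(A) is a compact Hausdorff space. -/
open scoped Quaternion

/-- The spectrum of an element of a unital real algebra:
Sp(a) = {s+it ∈ ℂ : (a − s·1)² + t²·1 is not invertible in A}. -/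
def realSpectrum {A : Type*} [Ring A] [Algebra ℝ A] (a : A) : Set ℂ :=
  {z : ℂ | ¬ IsUnit ((a - algebraMap ℝ A z.re) ^ 2 + algebraMap ℝ A (z.im ^ 2))}

/-- The spectral radius r(a) = sup{|λ| : λ ∈ Sp(a)}. -/
noncomputable def realSpectralRadius {A : Type*} [Ring A] [Algebra ℝ A] (a : A) : ℝ :=
  sSup {x : ℝ | ∃ z ∈ realSpectrum a, x = ‖z‖}

/-!
Every nonzero multiplicative map is unital, so `X(A)` is the set of `ℝ`-algebra homomorphisms
`A → ℍ`, which is closed in the product topology. It is compact because every `φ ∈ X(A)` satisfies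
`‖φ a‖ ^ p ≤ (2 ^ p + 1) ‖a‖`: the quaternion `q = φ a` is a root of `X² - 2 Re q X + |q|²`, so `φ`
kills `|q|² • 1 - (2 Re q • a - a²)`, which is therefore not invertible. If `|q| ^ p` were larger
than `(2 ^ p + 1) ‖a‖`, this element would be a small perturbation of the nonzero scalar `|q|²`,
hence invertible by the Neumann series.
-/

theorem Quaternion.mul_self_sub_two_re_smul_add_normSq (q : ℍ[ℝ]) :
    q * q - (2 * q.re) • q + Quaternion.normSq q • (1 : ℍ[ℝ]) = 0 := by
  ext <;> simp [Quaternion.normSq_def'] <;> ring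

theorem Quaternion.abs_re_le_norm (q : ℍ[ℝ]) : |q.re| ≤ ‖q‖ := by
  refine abs_le_of_sq_le_sq ?_ (norm_nonneg q)
  rw [sq, sq, ← Quaternion.normSq_eq_norm_mul_self, Quaternion.normSq_def']
  nlinarith [sq_nonneg q.imI, sq_nonneg q.imJ, sq_nonneg q.imK]

theorem ne_zero_iff_map_one_of_map_mul {M N : Type*} [MulOneClass M] [MonoidWithZero N]
    [IsLeftCancelMulZero N] [Nontrivial N] {x : M → N} (hmul : ∀ a b, x (a * b) = x a * x b) :
    x ≠ 0 ↔ x 1 = 1 := by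
  refine ⟨fun hx ↦ ?_, fun h1 h0 ↦ one_ne_zero (h1.symm.trans (congrFun h0 1))⟩
  have hx1 : x 1 ≠ 0 := fun h1 ↦ hx <| funext fun a ↦ by rw [← mul_one a, hmul, h1, mul_zero]; rfl
  exact mul_left_cancel₀ hx1 (by rw [← hmul, one_mul, mul_one])

/-- `p`-homogeneity is not part of `NormedRing`, so a submultiplicative `p`-norm inducing the metric
is a ring norm in Mathlib's sense; in particular the Neumann series is available. -/
abbrev NormedRing.ofDistEq {A : Type*} [Ring A] [MetricSpace A] (nrm : A → ℝ)
    (h_mul : ∀ a b : A, nrm (a * b) ≤ nrm a * nrm b)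
    (h_dist : ∀ a b : A, dist a b = nrm (a - b)) : NormedRing A :=
  { norm := nrm
    dist_eq := fun a b ↦ by rw [dist_comm, h_dist, neg_add_eq_sub]
    norm_mul_le := h_mul }

section PHomogeneous

variable {A : Type*} [NormedRing A] [Algebra ℝ A] {p : ℝ}
  (h_smul : ∀ (α : ℝ) (a : A), ‖α • a‖ = |α| ^ p * ‖a‖)
include h_smul

theorem isUnit_smul_one_sub_of_norm_lt [CompleteSpace A] {N : ℝ} (hN : N ≠ 0) {u : A}
    (hu : ‖u‖ < |N| ^ p) : IsUnit (N • (1 : A) - u) := by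
  have hpos : 0 < |N| ^ p := by positivity
  have hsmall : ‖N⁻¹ • u‖ < 1 := by
    rw [h_smul, abs_inv, Real.inv_rpow (abs_nonneg N), inv_mul_lt_iff₀ hpos, mul_one]
    exact hu
  have hfactor : N • (1 : A) - u = N • (1 : A) * (1 - N⁻¹ • u) := by
    rw [smul_one_mul, smul_sub, smul_smul, mul_inv_cancel₀ hN, one_smul]
  rw [hfactor, ← Algebra.algebraMap_eq_smul_one]
  exact ((isUnit_iff_ne_zero.mpr hN).map (algebraMap ℝ A)).mul
    (isUnit_one_sub_of_norm_lt_one hsmall)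

theorem rpow_norm_algHom_apply_le [CompleteSpace A] (hp : 0 < p) (φ : A →ₐ[ℝ] ℍ[ℝ]) (a : A) :
    ‖φ a‖ ^ p ≤ (2 ^ p + 1) * ‖a‖ := by
  by_contra! hlt
  set q := φ a
  set t := ‖q‖ ^ p with ht_def
  have hn : 0 ≤ ‖a‖ := norm_nonneg a
  have ht : 0 < t := lt_of_le_of_lt (by positivity) hlt
  have hat : ‖a‖ < t := by nlinarith [Real.rpow_nonneg zero_le_two p]
  have hN : 0 < Quaternion.normSq q := by
    refine lt_of_le_of_ne Quaternion.normSq_nonneg (Ne.symm fun h0 ↦ ?_)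
    rw [ht_def, Quaternion.normSq_eq_zero.mp h0, norm_zero, Real.zero_rpow hp.ne'] at ht
    exact ht.false
  have hNp : |Quaternion.normSq q| ^ p = t * t := by
    rw [abs_of_pos hN, Quaternion.normSq_eq_norm_mul_self,
      Real.mul_rpow (norm_nonneg q) (norm_nonneg q)]
  have hre : |2 * q.re| ^ p ≤ 2 ^ p * t := by
    rw [abs_mul, abs_two, Real.mul_rpow zero_le_two (abs_nonneg _), ht_def]
    gcongr
    exact q.abs_re_le_norm
  have hsmall : ‖(2 * q.re) • a - a * a‖ < |Quaternion.normSq q| ^ p := calc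
    _ ≤ ‖(2 * q.re) • a‖ + ‖a * a‖ := norm_sub_le _ _
    _ ≤ 2 ^ p * t * ‖a‖ + ‖a‖ * ‖a‖ := by
      rw [h_smul]
      gcongr
      exact norm_mul_le _ _
    _ < t * t := by nlinarith [mul_lt_mul_of_pos_left hlt ht, mul_le_mul_of_nonneg_right hat.le hn]
    _ = _ := hNp.symm
  have hzero : φ (Quaternion.normSq q • 1 - ((2 * q.re) • a - a * a)) = 0 := by
    rw [map_sub, map_sub, map_smul, map_smul, map_one, map_mul,
      ← q.mul_self_sub_two_re_smul_add_normSq]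
    abel
  exact not_isUnit_zero (hzero ▸ (isUnit_smul_one_sub_of_norm_lt h_smul hN.ne' hsmall).map φ)

theorem isCompact_setOf_map_add_smul_mul_one [CompleteSpace A] (hp : 0 < p) :
    IsCompact {x : A → ℍ[ℝ] | (∀ a b : A, x (a + b) = x a + x b) ∧
        (∀ (c : ℝ) (a : A), x (c • a) = c • x a) ∧
        (∀ a b : A, x (a * b) = x a * x b) ∧ x 1 = 1} := by
  refine (isCompact_univ_pi fun a ↦ isCompact_closedBall (0 : ℍ[ℝ]) (((2 ^ p + 1) * ‖a‖) ^ p⁻¹))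
    |>.of_isClosed_subset ?_ ?_
  · exact (isClosed_setOfPred_map_add A ℍ[ℝ]).inter <|
      (isClosed_setOfPred_map_smul A ℍ[ℝ] id).inter <|
      (isClosed_setOfPred_map_mul A ℍ[ℝ]).inter (isClosed_setOfPred_map_one A ℍ[ℝ])
  · rintro x ⟨hadd, hsmul, hmul, hone⟩ a -
    let φ : A →ₐ[ℝ] ℍ[ℝ] := AlgHom.ofLinearMap ⟨⟨x, hadd⟩, hsmul⟩ hone hmul
    rw [mem_closedBall_zero_iff, Real.le_rpow_inv_iff_of_pos (norm_nonneg _) (by positivity) hp]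
    exact rpow_norm_algHom_apply_le h_smul hp φ a

end PHomogeneous

theorem stmt7_general {A : Type*} [Ring A] [Algebra ℝ A] [MetricSpace A] [CompleteSpace A]
    {p : ℝ} (hp0 : 0 < p)
    (nrm : A → ℝ)
    (h_smul : ∀ (α : ℝ) (a : A), nrm (α • a) = |α| ^ p * nrm a)
    (h_mul : ∀ a b : A, nrm (a * b) ≤ nrm a * nrm b)
    (h_dist : ∀ a b : A, dist a b = nrm (a - b)) :
    CompactSpace {x : A → ℍ[ℝ] // (∀ a b : A, x (a + b) = x a + x b) ∧
        (∀ (c : ℝ) (a : A), x (c • a) = c • x a) ∧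
        (∀ a b : A, x (a * b) = x a * x b) ∧ x ≠ 0} ∧
    T2Space {x : A → ℍ[ℝ] // (∀ a b : A, x (a + b) = x a + x b) ∧
        (∀ (c : ℝ) (a : A), x (c • a) = c • x a) ∧
        (∀ a b : A, x (a * b) = x a * x b) ∧ x ≠ 0} := by
  let _ : NormedRing A := .ofDistEq nrm h_mul h_dist
  refine ⟨isCompact_iff_compactSpace.mp ?_, inferInstance⟩
  refine (congrArg IsCompact (Set.ext fun x ↦ ?_)).mpr
    (isCompact_setOf_map_add_smul_mul_one h_smul hp0)
  exact and_congr_right' <| and_congr_right' <| and_congr_right ne_zero_iff_map_one_of_map_mul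

/-- X(A), the set of nonzero ℝ-linear multiplicative maps A → ℍ with the topology of
pointwise convergence, is a compact Hausdorff space. -/
theorem stmt7 {A : Type*} [Ring A] [Algebra ℝ A] [MetricSpace A] [CompleteSpace A]
    {p : ℝ} (hp0 : 0 < p) (hp1 : p ≤ 1)
    (nrm : A → ℝ)
    (h_add : ∀ a b : A, nrm (a + b) ≤ nrm a + nrm b)
    (h_smul : ∀ (α : ℝ) (a : A), nrm (α • a) = |α| ^ p * nrm a)
    (h_mul : ∀ a b : A, nrm (a * b) ≤ nrm a * nrm b)
    (h_zero : ∀ a : A, nrm a = 0 → a = 0)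
    (h_dist : ∀ a b : A, dist a b = nrm (a - b))
    {m : ℝ} (hm : 0 < m)
    (h_spec : ∀ a : A, nrm a ^ (1 / p) ≤ m * realSpectralRadius a) :
    CompactSpace {x : A → ℍ[ℝ] // (∀ a b : A, x (a + b) = x a + x b) ∧
        (∀ (c : ℝ) (a : A), x (c • a) = c • x a) ∧
        (∀ a b : A, x (a * b) = x a * x b) ∧ x ≠ 0} ∧
    T2Space {x : A → ℍ[ℝ] // (∀ a b : A, x (a + b) = x a + x b) ∧
        (∀ (c : ℝ) (a : A), x (c • a) = c • x a) ∧
        (∀ a b : A, x (a * b) = x a * x b) ∧ x ≠ 0} :=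
  stmt7_general hp0 nrm h_smul h_mul h_dist
end

section
/- Let (A, ‖·‖) be a complex uniform p-normed algebra, i.e. a complex p-normed algebra with ‖a²‖ = ‖a‖² for all a ∈ A, and let |·| be the support seminorm of ‖·‖. Then |a| = ‖a‖^(1/p) for all a ∈ A. -/
/-!
Uniformity gives `‖aⁿ‖ = ‖a‖ⁿ`, and comparing `‖(xy)ⁿ⁺¹‖ = ‖x (yx)ⁿ y‖` with `‖yx‖ⁿ` yields
`‖xy‖ = ‖yx‖`. Consequently `z ↦ (1 + z a / n)ⁿ b (1 + z a / n)⁻ⁿ`, with the inverse replaced by a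
truncated geometric series, stays below `e ‖b‖` on the circle `|z| = R` once `n` is large. Its
linear coefficient is `ab - ba`, so a Cauchy estimate (proved by averaging over roots of unity)
gives `R^p ‖ab - ba‖ ≤ 2 e ‖b‖` for every `R`, and `A` is commutative. For commuting `x, y` the
binomial theorem gives `‖x + y‖^(1/p) ≤ ‖x‖^(1/p) + ‖y‖^(1/p)`, so the trivial decomposition
`a = a` already attains the infimum defining `|a|`.
-/

open Filter Topology Polynomial Finset

/-- The support seminorm of a p-homogeneous norm ‖·‖:
|a| = inf { ∑ᵢ ‖aᵢ‖^(1/p) : a = a₁ + ⋯ + aₙ, n ≥ 1 }. -/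
noncomputable def suppSeminorm {A : Type*} [AddCommGroup A] (p : ℝ) (nrm : A → ℝ)
    (a : A) : ℝ :=
  sInf {s : ℝ | ∃ l : List A, l ≠ [] ∧ l.sum = a ∧
    s = (l.map fun x => nrm x ^ (1 / p)).sum}

structure IsUniformPSeminorm {A : Type*} [Ring A] [Algebra ℂ A] (p : ℝ) (nrm : A → ℝ) :
    Prop where
  pos : 0 < p
  add_le : ∀ a b : A, nrm (a + b) ≤ nrm a + nrm b
  smul : ∀ (z : ℂ) (a : A), nrm (z • a) = ‖z‖ ^ p * nrm a
  mul_le : ∀ a b : A, nrm (a * b) ≤ nrm a * nrm b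
  sq : ∀ a : A, nrm (a ^ 2) = nrm a ^ 2

theorem le_of_forall_pow_succ_le_mul_pow {x y C : ℝ} (hy : 0 ≤ y)
    (h : ∀ n : ℕ, x ^ (n + 1) ≤ C * (n + 1) * y ^ n) : x ≤ y := by
  by_contra! hyx
  have hx : 0 < x := hy.trans_lt hyx
  have hr0 : 0 ≤ y / x := div_nonneg hy hx.le
  have hr1 : y / x < 1 := (div_lt_one hx).2 hyx
  have hlim : Tendsto (fun n : ℕ => C * ((n + 1) * (y / x) ^ n)) atTop (𝓝 0) := by
    simpa [add_mul] using ((tendsto_self_mul_const_pow_of_lt_one hr0 hr1).add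
      (tendsto_pow_atTop_nhds_zero_of_lt_one hr0 hr1)).const_mul C
  obtain ⟨n, hn⟩ := (hlim.eventually_lt_const hx).exists
  have := h n
  rw [div_pow, ← mul_div_assoc, ← mul_div_assoc, div_lt_iff₀ (pow_pos hx n), ← pow_succ'] at hn
  linarith

theorem exists_nat_mul_div_rpow_pow_le_one {p : ℝ} (t : ℝ) {k : ℕ} (hpk : 2 ≤ p * k) :
    ∃ n : ℕ, n ≠ 0 ∧ n * (t / n ^ p) ^ k ≤ 1 := by
  set n := ⌈t ^ k⌉₊ + 1
  have hn1 : (1 : ℝ) ≤ n := by simp [n]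
  have htn : t ^ k ≤ n := (Nat.le_ceil _).trans (by simp [n])
  have hnpk : (n : ℝ) ^ 2 ≤ ((n : ℝ) ^ p) ^ k := by
    rw [← Real.rpow_mul_natCast (by linarith), ← Real.rpow_two]
    exact Real.rpow_le_rpow_of_exponent_le hn1 hpk
  refine ⟨n, by simp [n], ?_⟩
  rw [div_pow, mul_div_assoc', div_le_one (by positivity)]
  calc (n : ℝ) * t ^ k ≤ n ^ 2 := by nlinarith
    _ ≤ ((n : ℝ) ^ p) ^ k := hnpk

theorem one_add_pow_le_exp_one {t : ℝ} (ht : 0 ≤ t) {n : ℕ} (hnt : n * t ≤ 1) :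
    (1 + t) ^ n ≤ Real.exp 1 :=
  calc (1 + t) ^ n ≤ Real.exp t ^ n :=
        pow_le_pow_left₀ (by linarith) (by linarith [Real.add_one_le_exp t]) n
    _ = Real.exp (n * t) := (Real.exp_nat_mul t n).symm
    _ ≤ Real.exp 1 := Real.exp_le_exp.2 hnt

theorem eq_zero_of_forall_rpow_mul_le {p d B : ℝ} (hp : 0 < p) (hd : 0 ≤ d)
    (hB : ∀ R : ℝ, 0 < R → R ^ p * d ≤ B) : d = 0 := by
  refine hd.antisymm' (not_lt.1 fun hd0 => ?_)
  obtain ⟨R, hR0, hRB⟩ := ((eventually_gt_atTop 0).and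
    (((tendsto_rpow_atTop hp).atTop_mul_const hd0).eventually_gt_atTop B)).exists
  exact (hB R hR0).not_gt hRB

section EvalScalar

variable {A : Type*} [Ring A] [Algebra ℂ A]

noncomputable def evalScalar (z : ℂ) : A[X] →ₐ[ℂ] A :=
  eval₂AlgHom (AlgHom.id ℂ A) (algebraMap ℂ A z) fun a =>
    Algebra.commute_algebraMap_right z (AlgHom.id ℂ A a)

@[simp] theorem evalScalar_C (z : ℂ) (a : A) : evalScalar z (C a) = a := eval₂_C _ _

@[simp] theorem evalScalar_X (z : ℂ) : evalScalar z (X : A[X]) = algebraMap ℂ A z := eval₂_X _ _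

theorem evalScalar_eq_sum (z : ℂ) {P : A[X]} {M : ℕ} (hM : P.natDegree < M) :
    evalScalar z P = ∑ i ∈ range M, z ^ i • P.coeff i := by
  rw [evalScalar, eval₂AlgHom_apply, eval₂_eq_sum_range' _ hM]
  refine sum_congr rfl fun i _ => ?_
  rw [← map_pow, ← Algebra.commutes, Algebra.smul_def]
  rfl

theorem sum_evalScalar_mul_pow_eq {M : ℕ} {ζ : ℂ} (hζ : IsPrimitiveRoot ζ M) (w : ℂ)
    {P : A[X]} (hM : P.natDegree < M) :
    ∑ j ∈ range M, evalScalar (w * ζ ^ j) P = (M : ℂ) • P.coeff 0 := by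
  have hM0 : 0 < M := hM.trans_le' (Nat.zero_le _)
  simp_rw [evalScalar_eq_sum _ hM]
  rw [sum_comm, sum_eq_single_of_mem 0 (mem_range.2 hM0)]
  · simp [Nat.cast_smul_eq_nsmul, nsmul_eq_mul]
  · intro i hi hi0
    have hζi : ζ ^ i ≠ 1 := hζ.pow_ne_one_of_pos_of_lt hi0 (mem_range.1 hi)
    have hgeom : ∑ j ∈ range M, (ζ ^ i) ^ j = 0 := by
      rw [geom_sum_eq hζi, ← pow_mul, mul_comm, pow_mul, hζ.pow_eq_one, one_pow, sub_self,
        zero_div]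
    simp_rw [← sum_smul, mul_pow, ← pow_mul, mul_comm _ i, pow_mul, ← mul_sum, hgeom, mul_zero,
      zero_smul]

end EvalScalar

section Coefficients

variable {A : Type*} [Ring A]

theorem coeff_zero_pow (U : A[X]) (n : ℕ) : (U ^ n).coeff 0 = U.coeff 0 ^ n :=
  map_pow constantCoeff U n

theorem coeff_one_pow_of_coeff_zero_eq_one {U : A[X]} (hU : U.coeff 0 = 1) (n : ℕ) :
    (U ^ n).coeff 1 = n • U.coeff 1 := by
  induction n with
  | zero => simp [coeff_one]
  | succ n ih =>
    simp [pow_succ, coeff_mul, Nat.antidiagonal_succ, ih, hU, coeff_zero_pow, add_mul, add_comm]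

theorem coeff_one_mul_C_mul {U V : A[X]} (hU : U.coeff 0 = 1) (hV : V.coeff 0 = 1) (b : A) :
    (U * C b * V).coeff 1 = U.coeff 1 * b + b * V.coeff 1 := by
  simp [coeff_mul, Nat.antidiagonal_succ, hU, hV, add_comm]

theorem coeff_geom_sum_C_mul_X (d : A) (k m : ℕ) :
    (∑ j ∈ range k, (C d * X) ^ j).coeff m = if m < k then d ^ m else 0 := by
  simp only [(commute_X (C d)).symm.mul_pow, ← C_pow, finsetSum_coeff, coeff_C_mul_X_pow]
  rw [sum_ite_eq, if_congr mem_range rfl rfl]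

end Coefficients

section ConjApprox

variable {A : Type*} [Ring A] [Algebra ℂ A]

/-- A polynomial stand-in for `z ↦ exp (z a) * b * exp (-z a)`: `(1 + z a / n) ^ n ≈ exp (z a)`,
and the geometric sum inverts `1 + z a / n` up to `O(z ^ k)`. -/
noncomputable def conjApprox (a b : A) (n k : ℕ) : A[X] :=
  (1 + C ((n : ℂ)⁻¹ • a) * X) ^ n * C b * (∑ j ∈ range k, (C (-(n : ℂ)⁻¹ • a) * X) ^ j) ^ n

theorem conjApprox_coeff_one (a b : A) {n k : ℕ} (hn : n ≠ 0) (hk : 2 ≤ k) :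
    (conjApprox a b n k).coeff 1 = a * b - b * a := by
  have hE : (1 + C ((n : ℂ)⁻¹ • a) * X).coeff 0 = 1 := by simp
  have hF : (∑ j ∈ range k, (C (-(n : ℂ)⁻¹ • a) * X) ^ j).coeff 0 = 1 := by
    rw [coeff_geom_sum_C_mul_X, if_pos (by omega), pow_zero]
  have hna : (n : ℂ) • (n : ℂ)⁻¹ • a = a := by
    rw [smul_smul, mul_inv_cancel₀ (Nat.cast_ne_zero.2 hn), one_smul]
  rw [conjApprox, coeff_one_mul_C_mul (by rw [coeff_zero_pow, hE, one_pow])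
    (by rw [coeff_zero_pow, hF, one_pow]), coeff_one_pow_of_coeff_zero_eq_one hE,
    coeff_one_pow_of_coeff_zero_eq_one hF, coeff_geom_sum_C_mul_X, if_pos (by omega), pow_one]
  simp [← Nat.cast_smul_eq_nsmul ℂ, coeff_one, neg_smul, hna, sub_eq_add_neg]

end ConjApprox

namespace IsUniformPSeminorm

variable {A : Type*} [Ring A] [Algebra ℂ A] {p : ℝ} {nrm : A → ℝ}

theorem nrm_zero (h : IsUniformPSeminorm p nrm) : nrm 0 = 0 := by
  simpa [Real.zero_rpow h.pos.ne'] using h.smul 0 0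

theorem nrm_neg (h : IsUniformPSeminorm p nrm) (a : A) : nrm (-a) = nrm a := by
  simpa using h.smul (-1) a

theorem nonneg (h : IsUniformPSeminorm p nrm) (a : A) : 0 ≤ nrm a := by
  have := h.add_le a (-a)
  rw [add_neg_cancel, h.nrm_zero, h.nrm_neg] at this
  linarith

theorem nrm_sub_le (h : IsUniformPSeminorm p nrm) (a b : A) : nrm (a - b) ≤ nrm a + nrm b := by
  simpa [sub_eq_add_neg, h.nrm_neg] using h.add_le a (-b)

theorem nrm_nsmul (h : IsUniformPSeminorm p nrm) (n : ℕ) (a : A) :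
    nrm (n • a) = (n : ℝ) ^ p * nrm a := by
  rw [← Nat.cast_smul_eq_nsmul ℂ, h.smul, Complex.norm_natCast]

theorem nrm_sum_le (h : IsUniformPSeminorm p nrm) {ι : Type*} (s : Finset ι) (f : ι → A) :
    nrm (∑ i ∈ s, f i) ≤ ∑ i ∈ s, nrm (f i) :=
  Finset.le_sum_of_subadditive nrm h.nrm_zero.le h.add_le s f

theorem nrm_one_le (h : IsUniformPSeminorm p nrm) : nrm (1 : A) ≤ 1 := by
  have h1 : nrm (1 : A) = nrm 1 ^ 2 := by simpa using h.sq 1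
  nlinarith [h.nonneg 1]

theorem nrm_pow_le (h : IsUniformPSeminorm p nrm) (a : A) (n : ℕ) :
    nrm (a ^ n) ≤ nrm a ^ n := by
  induction n with
  | zero => simpa using h.nrm_one_le
  | succ n ih =>
    rw [pow_succ, pow_succ]
    exact (h.mul_le _ _).trans (mul_le_mul_of_nonneg_right ih (h.nonneg a))

theorem nrm_pow_two_pow (h : IsUniformPSeminorm p nrm) (a : A) (k : ℕ) :
    nrm (a ^ 2 ^ k) = nrm a ^ 2 ^ k := by
  induction k with
  | zero => simp
  | succ k ih => rw [pow_succ, pow_mul, h.sq, ih, ← pow_mul]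

theorem nrm_pow (h : IsUniformPSeminorm p nrm) (a : A) {n : ℕ} (hn : n ≠ 0) :
    nrm (a ^ n) = nrm a ^ n := by
  refine le_antisymm (h.nrm_pow_le a n) ?_
  rcases (h.nonneg a).eq_or_lt with ha | ha
  · rw [← ha, zero_pow hn]
    exact h.nonneg _
  have hle : n ≤ 2 ^ n := Nat.lt_two_pow_self.le
  have key : nrm a ^ n * nrm a ^ (2 ^ n - n) ≤ nrm (a ^ n) * nrm a ^ (2 ^ n - n) := by
    calc nrm a ^ n * nrm a ^ (2 ^ n - n) = nrm (a ^ 2 ^ n) := by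
          rw [← pow_add, Nat.add_sub_cancel' hle, h.nrm_pow_two_pow]
      _ = nrm (a ^ n * a ^ (2 ^ n - n)) := by rw [← pow_add, Nat.add_sub_cancel' hle]
      _ ≤ nrm (a ^ n) * nrm (a ^ (2 ^ n - n)) := h.mul_le _ _
      _ ≤ nrm (a ^ n) * nrm a ^ (2 ^ n - n) :=
          mul_le_mul_of_nonneg_left (h.nrm_pow_le a _) (h.nonneg _)
  exact le_of_mul_le_mul_right key (pow_pos ha _)

theorem nrm_mul_comm (h : IsUniformPSeminorm p nrm) (x y : A) : nrm (x * y) = nrm (y * x) := by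
  suffices key : ∀ x y : A, nrm (x * y) ≤ nrm (y * x) from le_antisymm (key x y) (key y x)
  intro x y
  refine le_of_forall_pow_succ_le_mul_pow (C := nrm x * nrm y) (h.nonneg _) fun n => ?_
  have hxy := mul_nonneg (h.nonneg x) (h.nonneg y)
  calc nrm (x * y) ^ (n + 1) = nrm (x * (y * x) ^ n * y) := by
        rw [← h.nrm_pow _ n.succ_ne_zero, pow_succ, ← mul_pow_mul, mul_assoc]
    _ ≤ nrm x * nrm (y * x) ^ n * nrm y := by
        refine (h.mul_le _ _).trans (mul_le_mul_of_nonneg_right ?_ (h.nonneg y))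
        exact (h.mul_le _ _).trans (mul_le_mul_of_nonneg_left (h.nrm_pow_le _ n) (h.nonneg x))
    _ ≤ nrm x * nrm y * (n + 1) * nrm (y * x) ^ n := by
        have := mul_nonneg (mul_nonneg hxy (pow_nonneg (h.nonneg (y * x)) n)) n.cast_nonneg
        nlinarith

theorem nrm_coeff_zero_le (h : IsUniformPSeminorm p nrm) (P : A[X]) {R B : ℝ} (hR : 0 ≤ R)
    (hB : ∀ z : ℂ, ‖z‖ = R → nrm (evalScalar z P) ≤ B) : nrm (P.coeff 0) ≤ B := by
  have hRR : ‖(R : ℂ)‖ = R := by simp [abs_of_nonneg hR]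
  have hB0 : 0 ≤ B := (h.nonneg _).trans (hB R hRR)
  -- Averaging `P ^ N` over the `M`-th roots of unity isolates `P₀ ^ N`; the factor
  -- `M = N (deg P + 1)` disappears when taking `N`-th roots.
  refine le_of_forall_pow_succ_le_mul_pow (C := (P.natDegree + 1) * B) hB0 fun n => ?_
  set N := n + 1
  set M := N * (P.natDegree + 1)
  have hM0 : M ≠ 0 := Nat.mul_ne_zero n.succ_ne_zero P.natDegree.succ_ne_zero
  have hM : (P ^ N).natDegree < M :=
    natDegree_pow_le.trans_lt (by simp only [M, Nat.mul_succ]; omega)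
  set ζ := Complex.exp (2 * Real.pi * Complex.I / M)
  have hζ : IsPrimitiveRoot ζ M := Complex.isPrimitiveRoot_exp M hM0
  have hterm : ∀ j ∈ range M, nrm (evalScalar (R * ζ ^ j) (P ^ N)) ≤ B ^ N := fun j _ => by
    have hz : ‖(R : ℂ) * ζ ^ j‖ = R := by
      rw [norm_mul, norm_pow, hζ.norm'_eq_one hM0, one_pow, mul_one, hRR]
    rw [map_pow, h.nrm_pow _ n.succ_ne_zero]
    exact pow_le_pow_left₀ (h.nonneg _) (hB _ hz) N
  have hM1 : (1 : ℝ) ≤ M := by exact_mod_cast Nat.one_le_iff_ne_zero.2 hM0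
  calc nrm (P.coeff 0) ^ N = nrm (P.coeff 0 ^ N) := (h.nrm_pow _ n.succ_ne_zero).symm
    _ ≤ (M : ℝ) ^ p * nrm (P.coeff 0 ^ N) :=
        le_mul_of_one_le_left (h.nonneg _) (Real.one_le_rpow hM1 h.pos.le)
    _ = nrm ((M : ℂ) • (P ^ N).coeff 0) := by
        rw [h.smul, Complex.norm_natCast, coeff_zero_pow]
    _ = nrm (∑ j ∈ range M, evalScalar (R * ζ ^ j) (P ^ N)) := by
        rw [sum_evalScalar_mul_pow_eq hζ _ hM]
    _ ≤ ∑ j ∈ range M, B ^ N := (h.nrm_sum_le _ _).trans (sum_le_sum hterm)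
    _ = (P.natDegree + 1) * B * (n + 1) * B ^ n := by simp [M, N]; ring

theorem rpow_mul_nrm_coeff_one_le (h : IsUniformPSeminorm p nrm) (P : A[X]) {R B : ℝ}
    (hR : 0 < R) (hB : ∀ z : ℂ, ‖z‖ = R → nrm (evalScalar z P) ≤ B) :
    R ^ p * nrm (P.coeff 1) ≤ 2 * B := by
  have hRp : 0 < R ^ p := Real.rpow_pos_of_pos hR p
  have hc0 : nrm (P.coeff 0) ≤ B := h.nrm_coeff_zero_le P hR.le hB
  rw [mul_comm, ← le_div_iff₀ hRp, ← coeff_divX]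
  refine h.nrm_coeff_zero_le P.divX hR.le fun z hz => ?_
  have hsplit : z • evalScalar z P.divX = evalScalar z P - P.coeff 0 := by
    rw [eq_sub_iff_add_eq, Algebra.smul_def, ← evalScalar_X (A := A),
      ← evalScalar_C z (P.coeff 0), ← map_mul, ← map_add, X_mul_divX_add]
  rw [le_div_iff₀ hRp]
  calc nrm (evalScalar z P.divX) * R ^ p = nrm (z • evalScalar z P.divX) := by
        rw [h.smul, hz, mul_comm]
    _ = nrm (evalScalar z P - P.coeff 0) := by rw [hsplit]
    _ ≤ 2 * B := by linarith [h.nrm_sub_le (evalScalar z P) (P.coeff 0), hB z hz]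

theorem nrm_one_sub_pow_le (h : IsUniformPSeminorm p nrm) (v : A) (n : ℕ) :
    nrm ((1 - v) ^ n) ≤ (1 + nrm v) ^ n :=
  (h.nrm_pow_le _ n).trans <| pow_le_pow_left₀ (h.nonneg _)
    ((h.nrm_sub_le 1 v).trans (by linarith [h.nrm_one_le])) n

theorem nrm_evalScalar_conjApprox_le (h : IsUniformPSeminorm p nrm) (a b : A) (n k : ℕ)
    (z : ℂ) : nrm (evalScalar z (conjApprox a b n k)) ≤
      nrm b * (1 + (‖z‖ ^ p * nrm a / n ^ p) ^ k) ^ n := by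
  set u := (z * (n : ℂ)⁻¹) • a
  set F := ∑ j ∈ range k, (-u) ^ j
  have hE : evalScalar z (1 + C ((n : ℂ)⁻¹ • a) * X) = 1 + u := by
    rw [map_add, map_one, map_mul, evalScalar_C, evalScalar_X, ← Algebra.commutes,
      ← Algebra.smul_def, smul_smul]
  have hF : evalScalar z (∑ j ∈ range k, (C (-(n : ℂ)⁻¹ • a) * X) ^ j) = F := by
    simp only [map_sum, map_pow, map_mul, evalScalar_C, evalScalar_X, ← Algebra.commutes,
      ← Algebra.smul_def, smul_smul, F, u, neg_smul, mul_neg]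
  have hFE : F * (1 + u) = 1 - (-u) ^ k := by
    rw [← sub_neg_eq_add, geom_sum_mul_neg]
  have hcomm : Commute F (1 + u) :=
    Commute.sum_left _ _ _ fun j _ =>
      ((Commute.one_right _).add_right (Commute.refl u).neg_left).pow_left j
  have hu : nrm u = ‖z‖ ^ p * nrm a / n ^ p := by
    rw [h.smul, norm_mul, norm_inv, Complex.norm_natCast, Real.mul_rpow (norm_nonneg _)
      (inv_nonneg.2 n.cast_nonneg), Real.inv_rpow n.cast_nonneg]
    ring
  calc nrm (evalScalar z (conjApprox a b n k)) = nrm ((1 + u) ^ n * b * F ^ n) := by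
        rw [conjApprox, map_mul, map_mul, map_pow, map_pow, hE, hF, evalScalar_C]
    _ = nrm (b * (F * (1 + u)) ^ n) := by
        rw [h.nrm_mul_comm, ← mul_assoc, h.nrm_mul_comm, hcomm.mul_pow]
    _ ≤ nrm b * (1 + nrm u ^ k) ^ n := by
        rw [hFE]
        refine (h.mul_le _ _).trans (mul_le_mul_of_nonneg_left ?_ (h.nonneg b))
        refine (h.nrm_one_sub_pow_le _ n).trans
          (pow_le_pow_left₀ (by linarith [h.nonneg ((-u) ^ k)]) ?_ n)
        simpa [h.nrm_neg] using add_le_add_left (h.nrm_pow_le (-u) k) 1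
    _ = nrm b * (1 + (‖z‖ ^ p * nrm a / n ^ p) ^ k) ^ n := by rw [hu]

theorem rpow_mul_nrm_commutator_le (h : IsUniformPSeminorm p nrm) (a b : A) {R : ℝ}
    (hR : 0 < R) {n k : ℕ} (hn : n ≠ 0) (hk : 2 ≤ k) :
    R ^ p * nrm (a * b - b * a) ≤ 2 * (nrm b * (1 + (R ^ p * nrm a / n ^ p) ^ k) ^ n) := by
  rw [← conjApprox_coeff_one a b hn hk]
  exact h.rpow_mul_nrm_coeff_one_le _ hR fun z hz =>
    hz ▸ h.nrm_evalScalar_conjApprox_le a b n k z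

theorem rpow_mul_nrm_commutator_le_exp (h : IsUniformPSeminorm p nrm) (a b : A) {R : ℝ}
    (hR : 0 < R) : R ^ p * nrm (a * b - b * a) ≤ 2 * (nrm b * Real.exp 1) := by
  set k := ⌈2 / p⌉₊ + 2
  have hpk : 2 ≤ p * k := by
    rw [← div_le_iff₀' h.pos]
    exact (Nat.le_ceil _).trans (by simp [k])
  have ht : 0 ≤ R ^ p * nrm a := mul_nonneg (Real.rpow_nonneg hR.le p) (h.nonneg a)
  obtain ⟨n, hn, hnt⟩ := exists_nat_mul_div_rpow_pow_le_one (R ^ p * nrm a) hpk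
  refine (h.rpow_mul_nrm_commutator_le a b hR hn (k := k) (Nat.le_add_left 2 _)).trans ?_
  gcongr
  · exact h.nonneg b
  · exact one_add_pow_le_exp_one (pow_nonneg (div_nonneg ht (by positivity)) k) hnt

theorem mul_comm (h : IsUniformPSeminorm p nrm) (h_zero : ∀ a : A, nrm a = 0 → a = 0)
    (a b : A) : a * b = b * a :=
  sub_eq_zero.1 <| h_zero _ <| eq_zero_of_forall_rpow_mul_le h.pos (h.nonneg _)
    fun _ hR => h.rpow_mul_nrm_commutator_le_exp a b hR

theorem nrm_add_le_of_commute (h : IsUniformPSeminorm p nrm) {x y : A} (hxy : Commute x y) :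
    nrm (x + y) ≤ (nrm x ^ (1 / p) + nrm y ^ (1 / p)) ^ p := by
  set s := nrm x ^ (1 / p)
  set t := nrm y ^ (1 / p)
  have hs : 0 ≤ s := Real.rpow_nonneg (h.nonneg x) _
  have ht : 0 ≤ t := Real.rpow_nonneg (h.nonneg y) _
  have hxs : nrm x = s ^ p := by
    simp only [s, one_div]; exact (Real.rpow_inv_rpow (h.nonneg x) h.pos.ne').symm
  have hyt : nrm y = t ^ p := by
    simp only [t, one_div]; exact (Real.rpow_inv_rpow (h.nonneg y) h.pos.ne').symm
  have hterm : ∀ N, ∀ m ∈ range (N + 1),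
      nrm (x ^ m * y ^ (N - m) * (N.choose m : A)) ≤ ((s + t) ^ N) ^ p := by
    intro N m hm
    have hbinom : (N.choose m : ℝ) * (s ^ m * t ^ (N - m)) ≤ (s + t) ^ N := by
      rw [add_pow]
      refine le_of_eq_of_le ?_ (single_le_sum (fun i _ => by positivity) hm)
      ring
    calc nrm (x ^ m * y ^ (N - m) * (N.choose m : A))
        = (N.choose m : ℝ) ^ p * nrm (x ^ m * y ^ (N - m)) := by
          rw [← (Nat.cast_commute _ _).eq, ← nsmul_eq_mul, h.nrm_nsmul]
      _ ≤ (N.choose m : ℝ) ^ p * (nrm x ^ m * nrm y ^ (N - m)) := by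
          gcongr
          exact (h.mul_le _ _).trans (mul_le_mul (h.nrm_pow_le x m) (h.nrm_pow_le y _)
            (h.nonneg _) (pow_nonneg (h.nonneg x) m))
      _ = ((N.choose m : ℝ) * (s ^ m * t ^ (N - m))) ^ p := by
          rw [hxs, hyt, Real.mul_rpow (by positivity) (by positivity),
            Real.mul_rpow (by positivity) (by positivity), Real.rpow_pow_comm hs,
            Real.rpow_pow_comm ht]
      _ ≤ ((s + t) ^ N) ^ p := Real.rpow_le_rpow (by positivity) hbinom h.pos.le
  have hT : 0 ≤ (s + t) ^ p := Real.rpow_nonneg (by positivity) p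
  refine le_of_forall_pow_succ_le_mul_pow (C := 2 * (s + t) ^ p) hT fun n => ?_
  calc nrm (x + y) ^ (n + 1)
      = nrm (∑ m ∈ range (n + 2), x ^ m * y ^ (n + 1 - m) * ((n + 1).choose m : A)) := by
        rw [← h.nrm_pow _ n.succ_ne_zero, hxy.add_pow]
    _ ≤ ∑ m ∈ range (n + 2), ((s + t) ^ (n + 1)) ^ p :=
        (h.nrm_sum_le _ _).trans (sum_le_sum (hterm (n + 1)))
    _ = (n + 2) * (s + t) ^ p * ((s + t) ^ p) ^ n := by
        rw [sum_const, card_range, nsmul_eq_mul, ← Real.rpow_pow_comm (by positivity), pow_succ]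
        push_cast
        ring
    _ ≤ 2 * (s + t) ^ p * (n + 1) * ((s + t) ^ p) ^ n := by
        have := mul_nonneg hT (pow_nonneg hT n)
        nlinarith

theorem rpow_nrm_add_le_of_commute (h : IsUniformPSeminorm p nrm) {x y : A}
    (hxy : Commute x y) : nrm (x + y) ^ (1 / p) ≤ nrm x ^ (1 / p) + nrm y ^ (1 / p) := by
  have hst : 0 ≤ nrm x ^ (1 / p) + nrm y ^ (1 / p) :=
    add_nonneg (Real.rpow_nonneg (h.nonneg x) _) (Real.rpow_nonneg (h.nonneg y) _)
  calc nrm (x + y) ^ (1 / p) ≤ ((nrm x ^ (1 / p) + nrm y ^ (1 / p)) ^ p) ^ (1 / p) :=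
        Real.rpow_le_rpow (h.nonneg _) (h.nrm_add_le_of_commute hxy) (one_div_nonneg.2 h.pos.le)
    _ = nrm x ^ (1 / p) + nrm y ^ (1 / p) := by
        rw [one_div] at hst ⊢
        exact Real.rpow_rpow_inv hst h.pos.ne'

end IsUniformPSeminorm

theorem suppSeminorm_eq_of_subadditive {A : Type*} [AddCommGroup A] {p : ℝ} {nrm : A → ℝ}
    (hadd : ∀ x y : A, nrm (x + y) ^ (1 / p) ≤ nrm x ^ (1 / p) + nrm y ^ (1 / p)) (a : A) :
    suppSeminorm p nrm a = nrm a ^ (1 / p) := by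
  refine IsLeast.csInf_eq ⟨⟨[a], by simp, by simp, by simp⟩, ?_⟩
  rintro _ ⟨l, hl, rfl, rfl⟩
  exact List.le_sum_nonempty_of_subadditive (fun x => nrm x ^ (1 / p)) hadd l hl

theorem stmt13_general {A : Type*} [Ring A] [Algebra ℂ A]
    {p : ℝ} (hp0 : 0 < p)
    (nrm : A → ℝ)
    (h_add : ∀ a b : A, nrm (a + b) ≤ nrm a + nrm b)
    (h_smul : ∀ (z : ℂ) (a : A), nrm (z • a) = ‖z‖ ^ p * nrm a)
    (h_mul : ∀ a b : A, nrm (a * b) ≤ nrm a * nrm b)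
    (h_zero : ∀ a : A, nrm a = 0 → a = 0)
    (h_sq : ∀ a : A, nrm (a ^ 2) = nrm a ^ 2) :
    ∀ a : A, suppSeminorm p nrm a = nrm a ^ (1 / p) := by
  have h : IsUniformPSeminorm p nrm := ⟨hp0, h_add, h_smul, h_mul, h_sq⟩
  exact suppSeminorm_eq_of_subadditive fun x y =>
    h.rpow_nrm_add_le_of_commute (h.mul_comm h_zero x y)

/-- On a complex uniform p-normed algebra, the support seminorm satisfies |a| = ‖a‖^(1/p). -/
theorem stmt13 {A : Type*} [Ring A] [Algebra ℂ A]
    {p : ℝ} (hp0 : 0 < p) (hp1 : p ≤ 1)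
    (nrm : A → ℝ)
    (h_add : ∀ a b : A, nrm (a + b) ≤ nrm a + nrm b)
    (h_smul : ∀ (z : ℂ) (a : A), nrm (z • a) = ‖z‖ ^ p * nrm a)
    (h_mul : ∀ a b : A, nrm (a * b) ≤ nrm a * nrm b)
    (h_zero : ∀ a : A, nrm a = 0 → a = 0)
    (h_sq : ∀ a : A, nrm (a ^ 2) = nrm a ^ 2) :
    ∀ a : A, suppSeminorm p nrm a = nrm a ^ (1 / p) :=
  stmt13_general hp0 nrm h_add h_smul h_mul h_zero h_sq
end
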